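/- Consider an assignment problem with n agents and 3n objects where all agents have identical utilities given by positive integers w_1, …, w_{3n} with W/4 < w_j < W/2 for every j and Σ_{j=1}^{3n} w_j = nW. Then there exists a CEEI-FRAC discrete assignment if and only if {1,…,3n} can be partitioned into n disjoint sets E_1, …, E_n with Σ_{j∈E_i} w_j = W for every i (i.e., the 3-Partition instance is a yes-instance). -/

import Mathlib

open Finset

/-- Utility an agent with (row) utility function `ui` derives from a (row) allocation `xi`. -/
noncomputable def utilOf {m : ℕ} (ui : Fin m → ℝ) (xi : Fin m → ℝ) : ℝ :=
  ∑ j, xi j * ui j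

/-- A complete fractional assignment: entries in [0,1], every column (object) fully allocated. -/
def IsFracAssignment {n m : ℕ} (x : Fin n → Fin m → ℝ) : Prop :=
  (∀ i j, 0 ≤ x i j ∧ x i j ≤ 1) ∧ (∀ j, ∑ i, x i j = 1)

/-- A complete discrete assignment: entries in {0,1}, every column (object) fully allocated. -/
def IsDiscreteAssignment {n m : ℕ} (x : Fin n → Fin m → ℝ) : Prop :=
  (∀ i j, x i j = 0 ∨ x i j = 1) ∧ (∀ j, ∑ i, x i j = 1)

/-- `x` is a CEEI-DISC assignment witnessed by the price vector `p`: prices are nonnegative,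
and every agent's bundle is a discrete bundle of price at most 1 that maximizes the agent's
utility among all discrete bundles of price at most 1. -/
noncomputable def CEEIDiscWith {n m : ℕ} (u : Fin n → Fin m → ℝ)
    (x : Fin n → Fin m → ℝ) (p : Fin m → ℝ) : Prop :=
  (∀ j, 0 ≤ p j) ∧
  ∀ i, (∀ j, x i j = 0 ∨ x i j = 1) ∧ (∑ j, x i j * p j ≤ 1) ∧
    ∀ y : Fin m → ℝ, (∀ j, y j = 0 ∨ y j = 1) → (∑ j, y j * p j ≤ 1) →
      utilOf (u i) y ≤ utilOf (u i) (x i)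

noncomputable def CEEIDisc {n m : ℕ} (u : Fin n → Fin m → ℝ)
    (x : Fin n → Fin m → ℝ) : Prop :=
  ∃ p : Fin m → ℝ, CEEIDiscWith u x p

/-- `x` is a CEEI-FRAC assignment witnessed by the price vector `p`: prices are nonnegative,
and every agent's bundle lies in [0,1]^m, costs at most 1, and maximizes the agent's utility
among all fractional bundles of price at most 1. -/
noncomputable def CEEIFracWith {n m : ℕ} (u : Fin n → Fin m → ℝ)
    (x : Fin n → Fin m → ℝ) (p : Fin m → ℝ) : Prop :=
  (∀ j, 0 ≤ p j) ∧
  ∀ i, (∀ j, 0 ≤ x i j ∧ x i j ≤ 1) ∧ (∑ j, x i j * p j ≤ 1) ∧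
    ∀ y : Fin m → ℝ, (∀ j, 0 ≤ y j ∧ y j ≤ 1) → (∑ j, y j * p j ≤ 1) →
      utilOf (u i) y ≤ utilOf (u i) (x i)

noncomputable def CEEIFrac {n m : ℕ} (u : Fin n → Fin m → ℝ)
    (x : Fin n → Fin m → ℝ) : Prop :=
  ∃ p : Fin m → ℝ, CEEIFracWith u x p

/-- The Nash welfare of an assignment. -/
noncomputable def nash {n m : ℕ} (u : Fin n → Fin m → ℝ)
    (x : Fin n → Fin m → ℝ) : ℝ :=
  ∏ i, utilOf (u i) (x i)

/-!
With identical utilities `v` and equal budgets, every agent can afford every other agent's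
bundle, so a CEEI gives all agents the same utility; as the objects are fully allocated, that
common utility is `(∑ v) / n`, which for the weights of a 3-Partition instance is `W`.
Conversely, if every agent's bundle has utility exactly `W`, the prices `v j / W` make each
budget set exactly the set of bundles of utility at most `W`, so every agent's bundle is optimal.
A discrete assignment is the same thing as a partition of the objects into the agents' bundles.
-/

section Utility

variable {m : ℕ}

lemma utilOf_le_sum {v y : Fin m → ℝ} (hv : ∀ j, 0 ≤ v j) (hy : ∀ j, y j ≤ 1) :
    utilOf v y ≤ ∑ j, v j :=
  sum_le_sum fun j _ => mul_le_of_le_one_left (hv j) (hy j)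

lemma sum_mul_div_eq_utilOf_div (v y : Fin m → ℝ) (c : ℝ) :
    ∑ j, y j * (v j / c) = utilOf v y / c := by
  simp only [utilOf, sum_div, mul_div_assoc]

lemma sum_utilOf_eq_sum {n : ℕ} (v : Fin m → ℝ) {x : Fin n → Fin m → ℝ}
    (hx : ∀ j, ∑ i, x i j = 1) : ∑ i, utilOf v (x i) = ∑ j, v j := by
  simp only [utilOf]
  rw [sum_comm]
  simp only [← sum_mul, hx, one_mul]

end Utility

section IdenticalUtilities

variable {n m : ℕ} {v : Fin m → ℝ} {x : Fin n → Fin m → ℝ} {p : Fin m → ℝ}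

lemma CEEIFracWith.utilOf_le_utilOf (h : CEEIFracWith (fun _ => v) x p) (i k : Fin n) :
    utilOf v (x i) ≤ utilOf v (x k) :=
  (h.2 k).2.2 (x i) (h.2 i).1 (h.2 i).2.1

lemma CEEIFracWith.utilOf_eq_of_sum_eq (h : CEEIFracWith (fun _ => v) x p)
    (hx : ∀ j, ∑ i, x i j = 1) {W : ℝ} (hvW : ∑ j, v j = n * W) (i : Fin n) :
    utilOf v (x i) = W := by
  have hn : (n : ℝ) ≠ 0 := Nat.cast_ne_zero.2 (Fin.pos i).ne'
  refine mul_left_cancel₀ hn ?_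
  calc (n : ℝ) * utilOf v (x i) = ∑ k : Fin n, utilOf v (x k) := by
        rw [sum_congr rfl fun k _ => le_antisymm (h.utilOf_le_utilOf k i)
          (h.utilOf_le_utilOf i k)]
        simp
    _ = n * W := by rw [sum_utilOf_eq_sum v hx, hvW]

theorem ceeiFracWith_div_of_utilOf_eq (hv : ∀ j, 0 ≤ v j) {W : ℝ} (hW : 0 ≤ W)
    (hvW : ∑ j, v j = n * W) (hx : ∀ i j, 0 ≤ x i j ∧ x i j ≤ 1) (hxW : ∀ i, utilOf v (x i) = W) :
    CEEIFracWith (fun _ => v) x (fun j => v j / W) := by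
  refine ⟨fun j => div_nonneg (hv j) hW, fun i => ⟨hx i, ?_, fun y hy hpy => ?_⟩⟩
  · rw [sum_mul_div_eq_utilOf_div, hxW]
    exact div_self_le_one W
  · rw [hxW]
    -- For `W = 0` the prices are `0` (as `v j / 0 = 0`), but then `∑ v = 0` bounds every utility.
    rcases hW.eq_or_lt with rfl | hW
    · simpa [hvW] using utilOf_le_sum hv fun j => (hy j).2
    · rwa [sum_mul_div_eq_utilOf_div, div_le_one hW] at hpy

end IdenticalUtilities

section Partitions

variable {n m : ℕ}

def assignmentOf (E : Fin n → Finset (Fin m)) : Fin n → Fin m → ℝ :=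
  fun i j => if j ∈ E i then 1 else 0

lemma utilOf_assignmentOf (v : Fin m → ℝ) (E : Fin n → Finset (Fin m)) (i : Fin n) :
    utilOf v (assignmentOf E i) = ∑ j ∈ E i, v j := by
  simp [utilOf, assignmentOf, ite_mul]

lemma assignmentOf_mem_Icc (E : Fin n → Finset (Fin m)) (i : Fin n) (j : Fin m) :
    0 ≤ assignmentOf E i j ∧ assignmentOf E i j ≤ 1 := by
  unfold assignmentOf
  split_ifs <;> norm_num

lemma eq_assignmentOf_of_zero_or_one {x : Fin n → Fin m → ℝ}
    (hx : ∀ i j, x i j = 0 ∨ x i j = 1) :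
    x = assignmentOf fun i => univ.filter fun j => x i j = 1 := by
  ext i j
  rcases hx i j with h | h <;> simp [assignmentOf, h]

lemma isDiscreteAssignment_assignmentOf_iff (E : Fin n → Finset (Fin m)) :
    IsDiscreteAssignment (assignmentOf E) ↔ ∀ j, ∃! i, j ∈ E i := by
  have hcol (j : Fin m) : ∑ i, assignmentOf E i j = #(univ.filter fun i => j ∈ E i) := by
    simp [assignmentOf]
  simp only [IsDiscreteAssignment, hcol, Nat.cast_eq_one, card_eq_one_iff_existsUnique, mem_filter,
    mem_univ, true_and, and_iff_right_iff_imp]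
  intro _ i j
  unfold assignmentOf
  split_ifs <;> simp

lemma forall_existsUnique_mem_iff {ι α : Type*} (E : ι → Finset α) :
    (∀ j, ∃! i, j ∈ E i) ↔ (∀ i k, i ≠ k → Disjoint (E i) (E k)) ∧ ∀ j, ∃ i, j ∈ E i := by
  refine ⟨fun h => ⟨fun i k hik => disjoint_left.2 fun j hi hk => hik ?_, fun j => (h j).exists⟩,
    fun ⟨hdisj, hcover⟩ j => ?_⟩
  · exact (h j).unique hi hk
  · obtain ⟨i, hi⟩ := hcover j
    refine ⟨i, hi, fun k hk => ?_⟩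
    by_contra hki
    exact disjoint_left.1 (hdisj k i hki) hk hi

end Partitions

theorem ceei_frac_iff_three_partition_general (n W : ℕ) (w : Fin (3 * n) → ℕ)
    (hsum : ∑ j, w j = n * W)
    (u : Fin n → Fin (3 * n) → ℝ) (hu : ∀ i j, u i j = (w j : ℝ)) :
    (∃ x : Fin n → Fin (3 * n) → ℝ, IsDiscreteAssignment x ∧ CEEIFrac u x) ↔
      (∃ E : Fin n → Finset (Fin (3 * n)),
        (∀ i k, i ≠ k → Disjoint (E i) (E k)) ∧
        (∀ j, ∃ i, j ∈ E i) ∧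
        (∀ i, ∑ j ∈ E i, w j = W)) := by
  obtain rfl : u = fun _ j => (w j : ℝ) := funext₂ hu
  have hsumR : ∑ j, (w j : ℝ) = n * W := by exact_mod_cast hsum
  constructor
  · rintro ⟨x, hx, p, hp⟩
    obtain ⟨E, rfl⟩ : ∃ E, x = assignmentOf E := ⟨_, eq_assignmentOf_of_zero_or_one hx.1⟩
    obtain ⟨hdisj, hcover⟩ :=
      (forall_existsUnique_mem_iff E).1 ((isDiscreteAssignment_assignmentOf_iff E).1 hx)
    refine ⟨E, hdisj, hcover, fun i => ?_⟩
    have hEi := hp.utilOf_eq_of_sum_eq hx.2 hsumR i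
    rw [utilOf_assignmentOf] at hEi
    exact_mod_cast hEi
  · rintro ⟨E, hdisj, hcover, hE⟩
    refine ⟨assignmentOf E, (isDiscreteAssignment_assignmentOf_iff E).2
      ((forall_existsUnique_mem_iff E).2 ⟨hdisj, hcover⟩), _,
      ceeiFracWith_div_of_utilOf_eq (fun j => Nat.cast_nonneg _) (Nat.cast_nonneg W) hsumR
        (assignmentOf_mem_Icc E) fun i => ?_⟩
    rw [utilOf_assignmentOf]
    exact_mod_cast hE i

/-- 3-Partition reduction for CEEI-FRAC: with n agents having identical integer utilities
over 3n objects (each weight strictly between W/4 and W/2, total weight nW), a CEEI-FRAC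
discrete assignment exists iff the 3-Partition instance is a yes-instance. -/
theorem ceei_frac_iff_three_partition (n W : ℕ) (w : Fin (3 * n) → ℕ)
    (hw : ∀ j, 0 < w j)
    (hbound : ∀ j, W < 4 * w j ∧ 2 * w j < W)
    (hsum : ∑ j, w j = n * W)
    (u : Fin n → Fin (3 * n) → ℝ) (hu : ∀ i j, u i j = (w j : ℝ)) :
    (∃ x : Fin n → Fin (3 * n) → ℝ, IsDiscreteAssignment x ∧ CEEIFrac u x) ↔
      (∃ E : Fin n → Finset (Fin (3 * n)),
        (∀ i k, i ≠ k → Disjoint (E i) (E k)) ∧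
        (∀ j, ∃ i, j ∈ E i) ∧
        (∀ i, ∑ j ∈ E i, w j = W)) :=
  ceei_frac_iff_three_partition_general n W w hsum u hu
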